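/- arXiv:0708.1558 — 4 statements merged into one kernel-verified Lean document; each statement's English description precedes it below -/
import Mathlib

section
/- Let Λ ⊆ GF(q^2) satisfy ((α−β)/(γ−β))^{q−1} ≠ 1 for all triples of distinct α, β, γ ∈ Λ. Then |Λ| ≤ q+1 if q is odd, and |Λ| ≤ q+2 if q is even. -/
/-!
Identify `GF(q²)` with the affine plane `AG(2, q)`: the value `(α - β) ^ (q - 1)` is a
`(q + 1)`-st root of unity which depends only on the `GF(q)`-line through `α` and `β`, so the
hypothesis says that `Λ` is an arc. Seen from a point of `Λ`, the other points lie in distinct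
directions among the `q + 1` available ones, whence `|Λ| ≤ q + 2`. If `|Λ| = q + 2`, every
direction is used from every point of `Λ`, so every line through a point `P ∉ Λ` that meets `Λ`
meets it in exactly two points; hence `|Λ|` is even, which excludes odd `q`.
-/

open Finset Polynomial

variable {F : Type*} [Field F] {q : ℕ}

theorem sub_pow_of_dvd_card [Fintype F] (hq : q ∣ Fintype.card F) (x y : F) :
    (x - y) ^ q = x ^ q - y ^ q := by
  obtain ⟨p, _, n, hp, hcard⟩ := FiniteField.card' F
  have : Fact p.Prime := ⟨hp⟩
  obtain ⟨m, -, rfl⟩ := (Nat.dvd_prime_pow hp).mp (hcard ▸ hq)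
  exact sub_pow_char_pow x y m

theorem sub_pow_sub_one_comm (hq : 0 < q) (hfrob : ∀ x y : F, (x - y) ^ q = x ^ q - y ^ q)
    (x y : F) : (x - y) ^ (q - 1) = (y - x) ^ (q - 1) := by
  -- Frobenius fixes `-1`, in every characteristic.
  have h := hfrob 0 1
  rw [zero_sub, zero_pow hq.ne', one_pow, zero_sub, ← Nat.sub_add_cancel hq, pow_succ] at h
  have hneg : (-1 : F) ^ (q - 1) = 1 := by simpa using h
  rw [← neg_sub, neg_pow, hneg, one_mul]

theorem sub_pow_sub_one_eq_of_sub_pow_sub_one_eq (hq : 0 < q)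
    (hfrob : ∀ x y : F, (x - y) ^ q = x ^ q - y ^ q) {α γ P : F} (hαγ : α ≠ γ)
    (h : (α - P) ^ (q - 1) = (γ - P) ^ (q - 1)) :
    (α - γ) ^ (q - 1) = (γ - P) ^ (q - 1) := by
  have hpow (x : F) : x ^ q = x ^ (q - 1) * x := by rw [← pow_succ, Nat.sub_add_cancel hq]
  refine mul_right_cancel₀ (sub_ne_zero.mpr hαγ) ?_
  calc (α - γ) ^ (q - 1) * (α - γ) = ((α - P) - (γ - P)) ^ q := by rw [← hpow]; ring_nf
    _ = (α - P) ^ (q - 1) * (α - P) - (γ - P) ^ (q - 1) * (γ - P) := by rw [hfrob, hpow, hpow]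
    _ = (γ - P) ^ (q - 1) * (α - γ) := by rw [h]; ring

theorem one_lt_of_card_eq_sq [Fintype F] (hF : Fintype.card F = q ^ 2) : 1 < q :=
  (Nat.one_lt_pow_iff two_ne_zero).mp (hF ▸ Fintype.one_lt_card)

theorem pow_sub_one_mem_nthRootsFinset [Fintype F] (hF : Fintype.card F = q ^ 2) {x : F}
    (hx : x ≠ 0) : x ^ (q - 1) ∈ nthRootsFinset (q + 1) (1 : F) := by
  have hq : 1 ≤ q := (one_lt_of_card_eq_sq hF).le
  rw [mem_nthRootsFinset q.succ_pos, ← pow_mul,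
    show (q - 1) * (q + 1) = Fintype.card F - 1 by rw [hF]; zify [hq, Nat.one_le_pow 2 q hq]; ring]
  exact FiniteField.pow_card_sub_one_eq_one x hx

theorem card_nthRootsFinset_le (n : ℕ) (a : F) : #(nthRootsFinset n a) ≤ n := by
  classical
  rw [nthRootsFinset_def]
  exact (Multiset.toFinset_card_le _).trans (card_nthRoots n a)

variable [DecidableEq F]

theorem image_erase_subset_nthRootsFinset [Fintype F] (hF : Fintype.card F = q ^ 2)
    (Λ : Finset F) (β : F) :
    (Λ.erase β).image (fun α ↦ (α - β) ^ (q - 1)) ⊆ nthRootsFinset (q + 1) (1 : F) := by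
  intro u hu
  obtain ⟨α, hα, rfl⟩ := mem_image.mp hu
  exact pow_sub_one_mem_nthRootsFinset hF (sub_ne_zero.mpr (ne_of_mem_erase hα))

/-- `Λ` is an arc of `AG(2, q) ≅ GF(q²)`: from each of its points, the other points lie in
pairwise distinct directions, the direction of `α - β` being `(α - β) ^ (q - 1)`. -/
def IsArc (q : ℕ) (Λ : Finset F) : Prop :=
  ∀ β ∈ Λ, Set.InjOn (fun α ↦ (α - β) ^ (q - 1)) (Λ.erase β)

theorem isArc_of_div_pow_ne_one {Λ : Finset F}
    (harc : ∀ α ∈ Λ, ∀ β ∈ Λ, ∀ γ ∈ Λ, α ≠ β → α ≠ γ → β ≠ γ →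
      ((α - β) / (γ - β)) ^ (q - 1) ≠ 1) :
    IsArc q Λ := by
  intro β hβ α hα γ hγ h
  by_contra hαγ
  refine harc α (mem_of_mem_erase hα) β hβ γ (mem_of_mem_erase hγ) (ne_of_mem_erase hα) hαγ
    (ne_of_mem_erase hγ).symm ?_
  rw [div_pow, show (α - β) ^ (q - 1) = (γ - β) ^ (q - 1) from h,
    div_self (pow_ne_zero _ (sub_ne_zero.mpr (ne_of_mem_erase hγ)))]

namespace IsArc

variable {Λ : Finset F} {β P : F}

theorem card_image_erase (hΛ : IsArc q Λ) (hβ : β ∈ Λ) :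
    #((Λ.erase β).image fun α ↦ (α - β) ^ (q - 1)) = #Λ - 1 := by
  rw [card_image_of_injOn (hΛ β hβ), card_erase_of_mem hβ]

theorem card_le [Fintype F] (hF : Fintype.card F = q ^ 2) (hΛ : IsArc q Λ) : #Λ ≤ q + 2 := by
  obtain rfl | ⟨β, hβ⟩ := Λ.eq_empty_or_nonempty
  · simp
  have : #Λ - 1 ≤ q + 1 := calc
    #Λ - 1 = #((Λ.erase β).image fun α ↦ (α - β) ^ (q - 1)) :=
      (hΛ.card_image_erase hβ).symm
    _ ≤ #(nthRootsFinset (q + 1) (1 : F)) :=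
      card_le_card (image_erase_subset_nthRootsFinset hF Λ β)
    _ ≤ q + 1 := card_nthRootsFinset_le (q + 1) 1
  omega

theorem image_erase_eq [Fintype F] (hF : Fintype.card F = q ^ 2) (hΛ : IsArc q Λ)
    (hcard : #Λ = q + 2) (hβ : β ∈ Λ) :
    (Λ.erase β).image (fun α ↦ (α - β) ^ (q - 1)) = nthRootsFinset (q + 1) (1 : F) := by
  refine eq_of_subset_of_card_le (image_erase_subset_nthRootsFinset hF Λ β) ?_
  rw [hΛ.card_image_erase hβ, hcard]
  exact card_nthRootsFinset_le (q + 1) (1 : F)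

theorem card_filter_le_two (hq : 0 < q) (hfrob : ∀ x y : F, (x - y) ^ q = x ^ q - y ^ q)
    (hΛ : IsArc q Λ) (P u : F) : #{α ∈ Λ | (α - P) ^ (q - 1) = u} ≤ 2 := by
  by_contra! h
  obtain ⟨a, ha, b, hb, c, hc, hab, hac, hbc⟩ := two_lt_card.mp h
  simp only [mem_filter] at ha hb hc
  have hab' := sub_pow_sub_one_eq_of_sub_pow_sub_one_eq hq hfrob hab (ha.2.trans hb.2.symm)
  have hcb' := sub_pow_sub_one_eq_of_sub_pow_sub_one_eq hq hfrob hbc.symm (hc.2.trans hb.2.symm)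
  exact hac (hΛ b hb.1 (mem_erase.mpr ⟨hab, ha.1⟩) (mem_erase.mpr ⟨hbc.symm, hc.1⟩)
    (hab'.trans hcb'.symm))

theorem exists_ne_sub_pow_sub_one_eq [Fintype F] (hF : Fintype.card F = q ^ 2) (hΛ : IsArc q Λ)
    (hcard : #Λ = q + 2) (hP : P ∉ Λ) {α : F} (hα : α ∈ Λ) :
    ∃ γ ∈ Λ, γ ≠ α ∧ (γ - P) ^ (q - 1) = (α - P) ^ (q - 1) := by
  have hq : 0 < q := (one_lt_of_card_eq_sq hF).pos
  have hfrob := sub_pow_of_dvd_card (hF ▸ dvd_pow_self q two_ne_zero : q ∣ Fintype.card F)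
  have hPα : P ≠ α := fun h ↦ hP (h ▸ hα)
  have hdir := pow_sub_one_mem_nthRootsFinset hF (sub_ne_zero.mpr hPα)
  rw [← hΛ.image_erase_eq hF hcard hα] at hdir
  obtain ⟨γ, hγ, hγα⟩ := mem_image.mp hdir
  have hγP : γ ≠ P := fun h ↦ hP (h ▸ mem_of_mem_erase hγ)
  refine ⟨γ, mem_of_mem_erase hγ, ne_of_mem_erase hγ, ?_⟩
  rw [sub_pow_sub_one_eq_of_sub_pow_sub_one_eq hq hfrob hγP hγα, sub_pow_sub_one_comm hq hfrob]

theorem even_card [Fintype F] (hF : Fintype.card F = q ^ 2) (hΛ : IsArc q Λ)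
    (hcard : #Λ = q + 2) (hP : P ∉ Λ) : Even #Λ := by
  have hq : 0 < q := (one_lt_of_card_eq_sq hF).pos
  have hfrob := sub_pow_of_dvd_card (hF ▸ dvd_pow_self q two_ne_zero : q ∣ Fintype.card F)
  have hfiber : ∀ u ∈ Λ.image (fun α ↦ (α - P) ^ (q - 1)),
      #{α ∈ Λ | (α - P) ^ (q - 1) = u} = 2 := by
    intro u hu
    obtain ⟨α, hα, rfl⟩ := mem_image.mp hu
    obtain ⟨γ, hγ, hγα, hγdir⟩ := hΛ.exists_ne_sub_pow_sub_one_eq hF hcard hP hα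
    refine le_antisymm (hΛ.card_filter_le_two hq hfrob P _) (one_lt_card.mpr ?_)
    exact ⟨γ, mem_filter.mpr ⟨hγ, hγdir⟩, α, mem_filter.mpr ⟨hα, rfl⟩, hγα⟩
  rw [card_eq_sum_card_image (fun α ↦ (α - P) ^ (q - 1)) Λ, sum_congr rfl hfiber]
  simp

end IsArc

theorem arc_set_size_bound_general (q : ℕ)
    (F : Type) [Field F] [Fintype F] (hF : Fintype.card F = q ^ 2)
    (Λ : Finset F)
    (harc : ∀ α ∈ Λ, ∀ β ∈ Λ, ∀ γ ∈ Λ, α ≠ β → α ≠ γ → β ≠ γ →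
      ((α - β) / (γ - β)) ^ (q - 1) ≠ 1) :
    (Odd q → Λ.card ≤ q + 1) ∧ (Even q → Λ.card ≤ q + 2) := by
  classical
  have hΛ : IsArc q Λ := isArc_of_div_pow_ne_one harc
  refine ⟨fun hodd ↦ ?_, fun _ ↦ hΛ.card_le hF⟩
  by_contra! hlt
  have hcard : #Λ = q + 2 := le_antisymm (hΛ.card_le hF) hlt
  have hq3 : 3 ≤ q := by
    have := one_lt_of_card_eq_sq hF
    obtain ⟨k, rfl⟩ := hodd
    omega
  obtain ⟨P, -, hP⟩ : ∃ P ∈ (univ : Finset F), P ∉ Λ := by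
    refine exists_mem_notMem_of_card_lt_card ?_
    rw [card_univ, hF, hcard]
    nlinarith
  exact Nat.not_even_iff_odd.mpr (hcard ▸ hodd.add_even even_two) (hΛ.even_card hF hcard hP)

/-- If `Λ ⊆ GF(q^2)` satisfies `((α-β)/(γ-β))^(q-1) ≠ 1` for all distinct triples, then
`|Λ| ≤ q+1` for `q` odd and `|Λ| ≤ q+2` for `q` even. -/
theorem arc_set_size_bound (q : ℕ) (hq : IsPrimePow q)
    (F : Type) [Field F] [Fintype F] (hF : Fintype.card F = q ^ 2)
    (Λ : Finset F)
    (harc : ∀ α ∈ Λ, ∀ β ∈ Λ, ∀ γ ∈ Λ, α ≠ β → α ≠ γ → β ≠ γ →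
      ((α - β) / (γ - β)) ^ (q - 1) ≠ 1) :
    (Odd q → Λ.card ≤ q + 1) ∧ (Even q → Λ.card ≤ q + 2) :=
  arc_set_size_bound_general q F hF Λ harc
end

section
/- For λ ∈ GF(q^2), define F_λ(x,y) = x^{q+1} + y^q + y + λ^q x^q + λ x ∈ GF(q). Let S be a transversal of T_0 = {y : y^q+y=0} in GF(q^2) and Ω = GF(q^2) × S. Let Λ ⊆ GF(q^2) satisfy the arc condition ((α−β)/(γ−β))^{q−1} ≠ 1 for distinct α,β,γ ∈ Λ, with |Λ| ≥ 3. Then the evaluation map Ω → GF(q)^Λ sending (x,y) to (F_λ(x,y))_{λ∈Λ} is injective. -/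
/-!
The Frobenius `z ↦ z^q` is additive, so subtracting the equations for two parameters `λ, μ`
cancels the norm and `y` terms and leaves `T((λ - μ)(x₀ - x₁)) = 0`, where `T z = z^q + z`.
A nonzero `t` with `T t = 0` has `t^(q-1) = -1`; taking `λ = α, γ` against `μ = β` would give
`((α - β)/(γ - β))^(q-1) = 1`, against the arc condition, so `x₀ = x₁`. Then `T(y₀ - y₁) = 0`
puts `y₀, y₁` in the same coset of `T₀`, and they coincide since `S` is a transversal.
-/

/-- The Hermitian form `F_λ(x,y) = x^(q+1) + y^q + y + λ^q x^q + λ x`. -/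
def Fl (q : ℕ) {F : Type*} [Field F] (l x y : F) : F :=
  x ^ (q + 1) + y ^ q + y + l ^ q * x ^ q + l * x

section Field

variable {F : Type*} [Field F]

lemma pow_pred_eq_neg_one_of_pow_add_self_eq_zero {q : ℕ} (hq : q ≠ 0) {t : F} (ht : t ≠ 0)
    (h : t ^ q + t = 0) : t ^ (q - 1) = -1 := by
  apply mul_right_cancel₀ ht
  rw [← pow_succ, Nat.sub_add_cancel (Nat.one_le_iff_ne_zero.mpr hq)]
  linear_combination h

lemma eq_zero_of_pow_pred_div_ne_one {q : ℕ} (hq : q ≠ 0) {a c d : F} (ha : a ≠ 0) (hc : c ≠ 0)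
    (hac : (a / c) ^ (q - 1) ≠ 1) (had : (a * d) ^ q + a * d = 0)
    (hcd : (c * d) ^ q + c * d = 0) : d = 0 := by
  by_contra hd
  have hpa := pow_pred_eq_neg_one_of_pow_add_self_eq_zero hq (mul_ne_zero ha hd) had
  have hpc := pow_pred_eq_neg_one_of_pow_add_self_eq_zero hq (mul_ne_zero hc hd) hcd
  apply hac
  rw [← mul_div_mul_right a c hd, div_pow, hpa, hpc, neg_div_neg_eq, div_one]

lemma eq_of_mem_of_pow_add_self_sub_eq_zero {q : ℕ} (hq : q ≠ 0) {S : Set F}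
    (hS : ∀ z : F, ∃! s : F, s ∈ S ∧ (z - s) ^ q + (z - s) = 0) {y₀ y₁ : F}
    (hy₀ : y₀ ∈ S) (hy₁ : y₁ ∈ S) (h : (y₀ - y₁) ^ q + (y₀ - y₁) = 0) : y₀ = y₁ :=
  (hS y₀).unique ⟨hy₀, by simp [zero_pow hq]⟩ ⟨hy₁, h⟩

end Field

section Hermitian

variable {F : Type*} [Field F] {p : ℕ} [ExpChar F p] (k : ℕ)

lemma pow_add_self_sub_eq_zero_of_Fl_eq {l x y₀ y₁ : F}
    (h : Fl (p ^ k) l x y₀ = Fl (p ^ k) l x y₁) : (y₀ - y₁) ^ p ^ k + (y₀ - y₁) = 0 := by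
  unfold Fl at h
  rw [sub_pow_expChar_pow]
  linear_combination h

lemma pow_add_self_mul_sub_eq_zero_of_Fl_eq {l m x₀ y₀ x₁ y₁ : F}
    (hl : Fl (p ^ k) l x₀ y₀ = Fl (p ^ k) l x₁ y₁) (hm : Fl (p ^ k) m x₀ y₀ = Fl (p ^ k) m x₁ y₁) :
    ((l - m) * (x₀ - x₁)) ^ p ^ k + (l - m) * (x₀ - x₁) = 0 := by
  unfold Fl at hl hm
  rw [mul_pow, sub_pow_expChar_pow, sub_pow_expChar_pow]
  linear_combination hl - hm

end Hermitian

/-- The evaluation map `Ω → GF(q)^Λ`, `(x,y) ↦ (F_λ(x,y))_{λ∈Λ}`, is injective, where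
`Ω = GF(q^2) × S` and `S` is a transversal of the trace-zero subgroup `T₀`. -/
theorem evaluation_injective (q : ℕ) (hq : IsPrimePow q)
    (F : Type) [Field F] [Fintype F] (hF : Fintype.card F = q ^ 2)
    (S : Set F) (hS : ∀ z : F, ∃! s : F, s ∈ S ∧ (z - s) ^ q + (z - s) = 0)
    (Λ : Finset F) (hΛ : 3 ≤ Λ.card)
    (harc : ∀ α ∈ Λ, ∀ β ∈ Λ, ∀ γ ∈ Λ, α ≠ β → α ≠ γ → β ≠ γ →
      ((α - β) / (γ - β)) ^ (q - 1) ≠ 1) :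
    ∀ x₀ y₀ x₁ y₁ : F, y₀ ∈ S → y₁ ∈ S →
      (∀ l ∈ Λ, Fl q l x₀ y₀ = Fl q l x₁ y₁) → x₀ = x₁ ∧ y₀ = y₁ := by
  intro x₀ y₀ x₁ y₁ hy₀ hy₁ h
  obtain ⟨p, k, hp, -, rfl⟩ := hq
  have : Fact p.Prime := ⟨hp.nat_prime⟩
  have : CharP F p := charP_of_card_eq_prime_pow (f := k * 2) (by rw [hF, pow_mul])
  have hq : p ^ k ≠ 0 := pow_ne_zero k hp.ne_zero
  obtain ⟨α, hα, β, hβ, γ, hγ, hαβ, hαγ, hβγ⟩ := Finset.two_lt_card.mp hΛ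
  have hx : x₀ - x₁ = 0 :=
    eq_zero_of_pow_pred_div_ne_one hq (sub_ne_zero.mpr hαβ) (sub_ne_zero.mpr hβγ.symm)
      (harc α hα β hβ γ hγ hαβ hαγ hβγ)
      (pow_add_self_mul_sub_eq_zero_of_Fl_eq k (h α hα) (h β hβ))
      (pow_add_self_mul_sub_eq_zero_of_Fl_eq k (h γ hγ) (h β hβ))
  obtain rfl := sub_eq_zero.mp hx
  exact ⟨rfl, eq_of_mem_of_pow_add_self_sub_eq_zero hq hS hy₀ hy₁
    (pow_add_self_sub_eq_zero_of_Fl_eq k (h α hα))⟩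
end

section
/- Let α, β, γ be distinct elements of GF(q^2) with ((α−β)/(γ−β))^{q−1} ≠ 1, and let F_λ(x,y) = x^{q+1} + y^q + y + λ^q x^q + λ x. If (x,y) ∈ GF(q^2)^2 satisfies F_α(x,y) = F_β(x,y) = F_γ(x,y) = 0, then x = 0 and y^q + y = 0. -/
theorem Fl_sub_Fl {F : Type*} [Field F] {p : ℕ} [ExpChar F p] (k : ℕ) (l m x y : F) :
    Fl (p ^ k) l x y - Fl (p ^ k) m x y = ((l - m) * x) ^ p ^ k + (l - m) * x := by
  rw [mul_pow, sub_pow_expChar_pow]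
  unfold Fl
  ring

theorem Fl_zero_left {F : Type*} [Field F] {q : ℕ} (hq : q ≠ 0) (l y : F) :
    Fl q l 0 y = y ^ q + y := by
  simp [Fl, hq]

theorem div_pow_pred_eq_one_of_pow_eq_neg {F : Type*} [Field F] {q : ℕ} (hq : q ≠ 0) {u v : F}
    (hu : u ≠ 0) (hv : v ≠ 0) (huq : u ^ q = -u) (hvq : v ^ q = -v) :
    (u / v) ^ (q - 1) = 1 := by
  have hfix : (u / v) ^ (q - 1) * (u / v) = 1 * (u / v) := by
    rw [← pow_succ, Nat.sub_add_cancel (Nat.one_le_iff_ne_zero.2 hq), div_pow, huq, hvq,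
      neg_div_neg_eq, one_mul]
  exact mul_right_cancel₀ (div_ne_zero hu hv) hfix

theorem common_zero_of_three_forms_general (q : ℕ) (hq : IsPrimePow q)
    (F : Type) [Field F] [Fintype F] (hF : Fintype.card F = q ^ 2)
    (α β γ : F) (hαβ : α ≠ β) (hβγ : β ≠ γ)
    (harc : ((α - β) / (γ - β)) ^ (q - 1) ≠ 1)
    (x y : F) (h1 : Fl q α x y = 0) (h2 : Fl q β x y = 0) (h3 : Fl q γ x y = 0) :
    x = 0 ∧ y ^ q + y = 0 := by
  obtain ⟨p, k, hp, hk, rfl⟩ := hq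
  have : Fact p.Prime := ⟨hp.nat_prime⟩
  have : CharP F p := charP_of_card_eq_prime_pow (by rw [hF, ← pow_mul])
  have hq0 : p ^ k ≠ 0 := pow_ne_zero k hp.ne_zero
  have hx : x = 0 := by
    by_contra hx
    have hfix (l : F) (hl : Fl (p ^ k) l x y = 0) : ((l - β) * x) ^ p ^ k = -((l - β) * x) :=
      eq_neg_of_add_eq_zero_left (by rw [← Fl_sub_Fl, hl, h2, sub_zero])
    refine harc ?_
    rw [← mul_div_mul_right _ _ hx]
    exact div_pow_pred_eq_one_of_pow_eq_neg hq0 (mul_ne_zero (sub_ne_zero.2 hαβ) hx)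
      (mul_ne_zero (sub_ne_zero.2 hβγ.symm) hx) (hfix α h1) (hfix γ h3)
  subst hx
  exact ⟨rfl, Fl_zero_left hq0 α y ▸ h1⟩

/-- For distinct `α, β, γ` with `((α-β)/(γ-β))^(q-1) ≠ 1`, any common zero `(x,y)` of
`F_α, F_β, F_γ` has `x = 0` and `y^q + y = 0`. -/
theorem common_zero_of_three_forms (q : ℕ) (hq : IsPrimePow q)
    (F : Type) [Field F] [Fintype F] (hF : Fintype.card F = q ^ 2)
    (α β γ : F) (hαβ : α ≠ β) (hαγ : α ≠ γ) (hβγ : β ≠ γ)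
    (harc : ((α - β) / (γ - β)) ^ (q - 1) ≠ 1)
    (x y : F) (h1 : Fl q α x y = 0) (h2 : Fl q β x y = 0) (h3 : Fl q γ x y = 0) :
    x = 0 ∧ y ^ q + y = 0 :=
  common_zero_of_three_forms_general q hq F hF α β γ hαβ hβγ harc x y h1 h2 h3
end

section
/- Let q be a prime power, S a transversal of T_0 = {y ∈ GF(q^2) : y^q + y = 0} in GF(q^2), Ω = GF(q^2) × S, and Λ = {λ₁, ..., λ_N} ⊆ GF(q^2) a set of N ≥ 3 elements satisfying ((α−β)/(γ−β))^{q−1} ≠ 1 for all distinct α, β, γ ∈ Λ. Define C = {(F_{λ₁}(x,y), ..., F_{λ_N}(x,y)) : (x,y) ∈ Ω} ⊆ GF(q)^N, where F_λ(x,y) = x^{q+1} + y^q + y + λ^q x^q + λ x. Then C is a GF(q)-linear subspace of GF(q)^N of dimension 3. -/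
/-!
Write `σ x = x ^ q`, an involutive automorphism of `F = GF(q²)` with fixed field `K`, and
`Tr z = σ z + z`. Then `F_λ(x, y) = Tr(λ x) + (σ x * x + Tr y)`, and since `S` meets every fibre
of `Tr`, the code is the image of the `K`-linear map `(z, u) ↦ (Tr(λ z) + u)_λ` on `F × K`.
If `Tr(λ z)` is constant on `Λ`, then `(α - β) z` and `(γ - β) z` both lie in `ker Tr`, so their
quotient `(α - β) / (γ - β)` is fixed by `σ`; the arc condition forbids this unless `z = 0`.
So the map is injective and `dim C = [F : K] + 1 = 3`, where `[F : K] = 2` because `Tr` is onto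
`K` and any two nonzero elements of `ker Tr` have quotient in `K`.
-/

set_option synthInstance.maxHeartbeats 400000

section Involution

variable {F : Type*} [Field F] {σ : F →+* F} {K : Subfield F}
  (hσ : ∀ x, σ (σ x) = x) (hK : ∀ x, x ∈ K ↔ σ x = x)

include hK in
theorem div_mem_of_apply_eq_neg {a b : F} (ha : σ a = -a) (hb : σ b = -b) : a / b ∈ K :=
  (hK _).2 (by rw [map_div₀, ha, hb, neg_div_neg_eq])

include hσ hK in
theorem apply_mul_self_mem (x : F) : σ x * x ∈ K :=
  (hK _).2 (by rw [map_mul, hσ, mul_comm])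

def relTrace : F →ₗ[K] K where
  toFun z := ⟨σ z + z, (hK _).2 (by rw [map_add, hσ, add_comm])⟩
  map_add' x y := Subtype.ext (by simp only [map_add, Subfield.coe_add]; ring)
  map_smul' c x := Subtype.ext <| by
    simp only [Subfield.smul_def, smul_eq_mul, map_mul, (hK c).1 c.2, RingHom.id_apply,
      Subfield.coe_mul]
    ring

@[simp]
theorem coe_relTrace (z : F) : (relTrace hσ hK z : F) = σ z + z := rfl

theorem relTrace_eq_zero_iff {z : F} : relTrace hσ hK z = 0 ↔ σ z = -z := by
  rw [← Subtype.coe_inj, coe_relTrace, Subfield.coe_zero, add_eq_zero_iff_eq_neg]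

theorem relTrace_ne_zero (hσ₁ : ∃ x, σ x ≠ x) : relTrace hσ hK ≠ 0 := by
  obtain ⟨x, hx⟩ := hσ₁
  intro h
  have hx' := (relTrace_eq_zero_iff hσ hK).1 (LinearMap.congr_fun h x)
  have h1 := (relTrace_eq_zero_iff hσ hK).1 (LinearMap.congr_fun h 1)
  rw [map_one] at h1
  exact hx (by linear_combination hx' - x * h1)

theorem relTrace_surjective (hσ₁ : ∃ x, σ x ≠ x) : Function.Surjective (relTrace hσ hK) :=
  LinearMap.surjective (relTrace_ne_zero hσ hK hσ₁)

include hσ hK in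
theorem finrank_eq_two_of_involution [FiniteDimensional K F] (hσ₁ : ∃ x, σ x ≠ x) :
    Module.finrank K F = 2 := by
  rw [← Module.Dual.finrank_ker_add_one_of_ne_zero (relTrace_ne_zero hσ hK hσ₁)]
  obtain ⟨x, hx⟩ := hσ₁
  have hv : σ x - x ∈ LinearMap.ker (relTrace hσ hK) := by
    rw [LinearMap.mem_ker, relTrace_eq_zero_iff, map_sub, hσ, neg_sub]
  have hv0 : σ x - x ≠ 0 := sub_ne_zero.2 hx
  suffices Module.finrank K (LinearMap.ker (relTrace hσ hK)) = 1 by rw [this]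
  refine (finrank_eq_one_iff_of_nonzero' (⟨_, hv⟩ : LinearMap.ker (relTrace hσ hK))
    (by simpa using hv0)).2 ?_
  rintro ⟨w, hw⟩
  rw [LinearMap.mem_ker, relTrace_eq_zero_iff] at hw
  refine ⟨⟨w / (σ x - x), div_mem_of_apply_eq_neg hK hw ?_⟩, Subtype.ext (div_mul_cancel₀ w hv0)⟩
  rw [map_sub, hσ, neg_sub]

def traceEvalMap (Λ : Finset F) : F × K →ₗ[K] (Λ → K) :=
  LinearMap.pi fun l =>
    relTrace hσ hK ∘ₗ LinearMap.mulLeft K (l : F) ∘ₗ LinearMap.fst K F K + LinearMap.snd K F K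

theorem traceEvalMap_apply (Λ : Finset F) (zu : F × K) (l : Λ) :
    traceEvalMap hσ hK Λ zu l = relTrace hσ hK (l * zu.1) + zu.2 := rfl

theorem traceEvalMap_injective {Λ : Finset F} (hΛ : 3 ≤ Λ.card)
    (hcol : ∀ α ∈ Λ, ∀ β ∈ Λ, ∀ γ ∈ Λ, α ≠ β → α ≠ γ → β ≠ γ → (α - β) / (γ - β) ∉ K) :
    Function.Injective (traceEvalMap hσ hK Λ) := by
  rw [← LinearMap.ker_eq_bot, LinearMap.ker_eq_bot']
  rintro ⟨z, u⟩ h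
  have hTr : ∀ l ∈ Λ, σ l * σ z + l * z = -u := fun l hl => by
    have := congr_arg Subtype.val (congr_fun h ⟨l, hl⟩)
    simp only [traceEvalMap_apply, Subfield.coe_add, coe_relTrace, map_mul, Pi.zero_apply,
      ZeroMemClass.coe_zero] at this
    linear_combination this
  obtain ⟨α, β, γ, hα, hβ, hγ, hαβ, hαγ, hβγ⟩ := Finset.two_lt_card_iff.1 hΛ
  obtain rfl : z = 0 := by
    by_contra hz
    refine hcol α hα β hβ γ hγ hαβ hαγ hβγ ?_
    rw [← mul_div_mul_right _ _ hz]
    apply div_mem_of_apply_eq_neg hK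
    · rw [map_mul, map_sub]; linear_combination hTr α hα - hTr β hβ
    · rw [map_mul, map_sub]; linear_combination hTr γ hγ - hTr β hβ
  have hu := hTr α hα
  simp only [mul_zero, map_zero, add_zero, zero_eq_neg] at hu
  rw [Prod.mk_eq_zero, ← Subtype.coe_inj]
  exact ⟨rfl, hu⟩

theorem exists_mem_relTrace_eq (hσ₁ : ∃ x, σ x ≠ x) {S : Set F}
    (hS : ∀ z, ∃ s ∈ S, relTrace hσ hK (z - s) = 0) (t : K) : ∃ y ∈ S, relTrace hσ hK y = t := by
  obtain ⟨z, rfl⟩ := relTrace_surjective hσ hK hσ₁ t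
  obtain ⟨s, hs, hzs⟩ := hS z
  exact ⟨s, hs, by rwa [map_sub, sub_eq_zero, eq_comm] at hzs⟩

theorem coe_range_traceEvalMap (Λ : Finset F) {S : Set F}
    (hS : ∀ t : K, ∃ y ∈ S, relTrace hσ hK y = t) :
    (LinearMap.range (traceEvalMap hσ hK Λ) : Set (Λ → K)) =
      {c | ∃ x y, y ∈ S ∧ ∀ l : Λ, (c l : F) = σ x * x + σ y + y + σ l * σ x + l * x} := by
  ext c
  simp only [SetLike.mem_coe, LinearMap.mem_range, Set.mem_ofPred_eq]
  constructor
  · rintro ⟨⟨z, u⟩, rfl⟩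
    obtain ⟨y, hy, hyu⟩ := hS (u - ⟨_, apply_mul_self_mem hσ hK z⟩)
    refine ⟨z, y, hy, fun l => ?_⟩
    have := congr_arg Subtype.val hyu
    simp only [coe_relTrace, Subfield.coe_sub] at this
    simp only [traceEvalMap_apply, Subfield.coe_add, coe_relTrace, map_mul]
    linear_combination -this
  · rintro ⟨x, y, hy, hc⟩
    refine ⟨(x, ⟨_, apply_mul_self_mem hσ hK x⟩ + relTrace hσ hK y), funext fun l => ?_⟩
    rw [← Subtype.coe_inj, hc]
    simp only [traceEvalMap_apply, Subfield.coe_add, coe_relTrace, map_mul]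
    ring

end Involution

theorem exists_ringHom_eq_pow {F : Type*} [Field F] [Fintype F] {q n : ℕ} (hq : IsPrimePow q)
    (hF : Fintype.card F = q ^ n) : ∃ σ : F →+* F, ∀ x, σ x = x ^ q := by
  obtain ⟨p, k, hp, -, rfl⟩ := hq
  have := Fact.mk hp.nat_prime
  have : CharP F p := charP_of_card_eq_prime_pow (by rw [hF, ← pow_mul])
  exact ⟨iterateFrobenius F p k, iterateFrobenius_def p k⟩

theorem exists_pow_ne_self {F : Type*} [Field F] [Fintype F] {q : ℕ} (hq : 1 < q)
    (hF : q < Fintype.card F) : ∃ x : F, x ^ q ≠ x := by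
  classical
  by_contra! h
  refine hF.not_ge ?_
  rw [← Finset.card_univ, ← FiniteField.X_pow_card_sub_X_natDegree_eq F hq]
  refine Polynomial.card_le_degree_of_subset_roots fun x _ => ?_
  simp [Polynomial.mem_roots (FiniteField.X_pow_card_sub_X_ne_zero F hq), h x]

theorem pow_sub_one_eq_one_of_pow_eq_self {F : Type*} [Field F] {q : ℕ} (hq : q ≠ 0) {r : F}
    (hr : r ≠ 0) (h : r ^ q = r) : r ^ (q - 1) = 1 := by
  refine mul_right_cancel₀ hr ?_
  rw [← pow_succ, Nat.sub_add_cancel (Nat.one_le_iff_ne_zero.2 hq), h, one_mul]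

/-- The code `C = {(F_λ(x,y))_{λ∈Λ} : (x,y) ∈ Ω}` is a `GF(q)`-linear subspace of
`GF(q)^N` of dimension `3`, where `GF(q)` is the subfield `K` of `F = GF(q^2)` fixed by
`x ↦ x^q`, `S` is a transversal of `T₀` and `Ω = GF(q^2) × S`. -/
theorem code_is_three_dimensional (q : ℕ) (hq : IsPrimePow q)
    (F : Type) [Field F] [Fintype F] (hF : Fintype.card F = q ^ 2)
    (K : Subfield F) (hK : ∀ x : F, x ∈ K ↔ x ^ q = x)
    (S : Set F) (hS : ∀ z : F, ∃! s : F, s ∈ S ∧ (z - s) ^ q + (z - s) = 0)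
    (Λ : Finset F) (hΛ : 3 ≤ Λ.card)
    (harc : ∀ α ∈ Λ, ∀ β ∈ Λ, ∀ γ ∈ Λ, α ≠ β → α ≠ γ → β ≠ γ →
      ((α - β) / (γ - β)) ^ (q - 1) ≠ 1) :
    ∃ V : Submodule ↥K ({l : F // l ∈ Λ} → ↥K),
      (V : Set ({l : F // l ∈ Λ} → ↥K)) =
        {c | ∃ x y : F, y ∈ S ∧ ∀ l : {l : F // l ∈ Λ}, (c l : F) = Fl q l.1 x y} ∧
      Module.finrank ↥K ↥V = 3 := by
  obtain ⟨σ, hσq⟩ := exists_ringHom_eq_pow hq hF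
  have hσ : ∀ x, σ (σ x) = x := fun x => by
    rw [hσq, hσq, ← pow_mul, ← sq, ← hF, FiniteField.pow_card]
  have hKσ : ∀ x, x ∈ K ↔ σ x = x := fun x => by rw [hσq, hK]
  have hσ₁ : ∃ x, σ x ≠ x := by
    simpa only [hσq] using exists_pow_ne_self hq.one_lt (by rw [hF]; nlinarith [hq.one_lt])
  have hcol : ∀ α ∈ Λ, ∀ β ∈ Λ, ∀ γ ∈ Λ, α ≠ β → α ≠ γ → β ≠ γ → (α - β) / (γ - β) ∉ K :=
    fun α hα β hβ γ hγ hαβ hαγ hβγ hK' => harc α hα β hβ γ hγ hαβ hαγ hβγ <|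
      pow_sub_one_eq_one_of_pow_eq_self hq.one_lt.ne_bot
        (div_ne_zero (sub_ne_zero.2 hαβ) (sub_ne_zero.2 hβγ.symm)) ((hK _).1 hK')
  have hS' : ∀ z, ∃ s ∈ S, relTrace hσ hKσ (z - s) = 0 := fun z => by
    obtain ⟨s, ⟨hs, hzs⟩, -⟩ := hS z
    exact ⟨s, hs, (relTrace_eq_zero_iff hσ hKσ).2 (by rw [hσq]; linear_combination hzs)⟩
  have hFl : ∀ l x y : F, Fl q l x y = σ x * x + σ y + y + σ l * σ x + l * x := by
    simp only [Fl, hσq, pow_succ, implies_true]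
  refine ⟨LinearMap.range (traceEvalMap hσ hKσ Λ), ?_, ?_⟩
  · simp only [hFl]
    exact coe_range_traceEvalMap hσ hKσ Λ (exists_mem_relTrace_eq hσ hKσ hσ₁ hS')
  · rw [LinearMap.finrank_range_of_inj (traceEvalMap_injective hσ hKσ hΛ hcol), Module.finrank_prod,
      finrank_eq_two_of_involution hσ hKσ hσ₁, Module.finrank_self]
end
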